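/- Fix s ≥ 1, P_s = {a_1,…,a_s, c | a_i < c}, with μ the Möbius function of P_s^*. For 0 ≤ m ≤ n and any word w of length m consisting entirely of letters from {a_1,…,a_s}: μ(w, c^n) = μ(a_1^m, c^n) = (−1)^m μ(c^m, c^n) (with μ(c^0, c^n) interpreted as μ(∅, c^n)). -/

import Mathlib

/-!
A left inverse of the zeta matrix on the finite set of words of length at most `n` is also a right
inverse, so `μ(u, cⁿ) = -∑_{u < z ≤ cⁿ} μ(z, cⁿ)`. By downward induction on `u` this gives
`μ(u, cⁿ) = (-1)^{#a(u)} μ(c^{|u|}, cⁿ)`, where `#a(u)` counts the letters `aᵢ` of `u`: when `u`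
contains some `aᵢ`, the signed count `∑_{z ≥ u, |z| = ℓ} (-1)^{#a(z)}` vanishes for every `ℓ`, as
splitting off the first letter `y` of `z` shows: for `u = aᵢ u'` the choices `y = c` and `y = aᵢ`
cancel, and every other `y` contributes a signed count above `u` of length `ℓ - 1`.
-/

/-- The alphabet `P_s = {a_1, …, a_s, c}` with `a_i < c`: `some i` is `a_i`, `none` is `c`. -/
abbrev Letter (s : ℕ) := Option (Fin s)

/-- The generalized subword order on words over `P_s`. -/
def WLE {s : ℕ} (u w : List (Letter s)) : Prop :=
  ∃ w', w'.Sublist w ∧ List.Forall₂ (fun x y => x = y ∨ y = none) u w'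

open List

variable {s : ℕ} {x y : Letter s} {u v w z : List (Letter s)}

lemma count_none_le_of_forall₂ (h : Forall₂ (fun x y => x = y ∨ y = none) u z) :
    u.count none ≤ z.count none := by
  induction h with
  | nil => rfl
  | cons hxy _ ih => rcases hxy with rfl | rfl <;> grind

lemma count_none_lt_of_forall₂ (h : Forall₂ (fun x y => x = y ∨ y = none) u z) (hne : u ≠ z) :
    u.count none < z.count none := by
  induction h with
  | nil => exact absurd rfl hne
  | @cons x y u z hxy h ih =>
    by_cases hx : x = y
    · subst hx
      have := ih fun h => hne (h ▸ rfl)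
      simp only [count_cons]
      omega
    · obtain rfl : y = none := hxy.resolve_left hx
      have := count_none_le_of_forall₂ h
      simp [hx]
      omega

lemma wle_iff_sublistForall₂ :
    WLE u w ↔ SublistForall₂ (fun x y => x = y ∨ y = none) u w := by
  rw [sublistForall₂_iff, WLE]
  exact exists_congr fun _ => and_comm

namespace WLE

lemma refl (u : List (Letter s)) : WLE u u :=
  ⟨u, Sublist.refl u, forall₂_same.2 fun _ _ => Or.inl rfl⟩

lemma trans (huv : WLE u v) (hvw : WLE v w) : WLE u w := by
  have : IsTrans (Letter s) (fun x y => x = y ∨ y = none) :=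
    ⟨by rintro a b c (rfl | rfl) (rfl | rfl) <;> simp⟩
  rw [wle_iff_sublistForall₂] at *
  exact _root_.trans huv hvw

lemma length_le (h : WLE u w) : u.length ≤ w.length := by
  obtain ⟨w', hs, hf⟩ := h
  exact hf.length_eq ▸ hs.length_le

lemma count_none_le (h : WLE u w) : u.count none ≤ w.count none := by
  obtain ⟨w', hs, hf⟩ := h
  exact (count_none_le_of_forall₂ hf).trans (hs.count_le none)

lemma length_add_count_none_lt (h : WLE u w) (hne : u ≠ w) :
    u.length + u.count none < w.length + w.count none := by
  obtain ⟨w', hs, hf⟩ := h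
  rcases (hf.length_eq ▸ hs.length_le).lt_or_eq with hlt | heq
  · have := (count_none_le_of_forall₂ hf).trans (hs.count_le none)
    omega
  · obtain rfl := hs.eq_of_length (hf.length_eq ▸ heq)
    have := count_none_lt_of_forall₂ hf hne
    omega

lemma antisymm (huw : WLE u w) (hwu : WLE w u) : u = w := by
  by_contra hne
  have := huw.length_add_count_none_lt hne
  have := hwu.length_add_count_none_lt (Ne.symm hne)
  omega

lemma of_cons (h : WLE (x :: u) w) : WLE u w := by
  obtain ⟨_, hs, _ | ⟨_, hf⟩⟩ := h
  exact ⟨_, (sublist_cons_self _ _).trans hs, hf⟩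

end WLE

lemma not_wle_cons_nil : ¬ WLE (x :: u) [] :=
  fun h => by simpa using h.length_le

lemma wle_cons_cons_iff :
    WLE (x :: u) (y :: z) ↔ (x = y ∨ y = none) ∧ WLE u z ∨ WLE (x :: u) z := by
  simp only [wle_iff_sublistForall₂]
  constructor
  · rintro (_ | ⟨hxy, h⟩ | h)
    · exact Or.inl ⟨hxy, h⟩
    · exact Or.inr h
  · rintro (⟨hxy, h⟩ | h)
    · exact .cons hxy h
    · exact .cons_right h

lemma wle_cons_cons_iff_of_rel (hxy : x = y ∨ y = none) : WLE (x :: u) (y :: z) ↔ WLE u z := by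
  rw [wle_cons_cons_iff]
  exact ⟨fun h => h.elim And.right WLE.of_cons, fun h => Or.inl ⟨hxy, h⟩⟩

lemma wle_cons_cons_iff_of_not_rel (hxy : ¬ (x = y ∨ y = none)) :
    WLE (x :: u) (y :: z) ↔ WLE (x :: u) z := by
  simp [wle_cons_cons_iff, hxy]

open Finset

lemma Finset.sum_mul_eq_ite_swap {α R : Type*} [CommRing R] [DecidableEq α] (Q : Finset α)
    (f g : α → α → R) (h : ∀ u ∈ Q, ∀ v ∈ Q, ∑ z ∈ Q, f u z * g z v = if u = v then 1 else 0)
    {u v : α} (hu : u ∈ Q) (hv : v ∈ Q) :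
    ∑ z ∈ Q, g u z * f z v = if u = v then 1 else 0 := by
  let F : Matrix Q Q R := .of fun a b => f a b
  let G : Matrix Q Q R := .of fun a b => g a b
  have hFG : F * G = 1 := by
    ext a b
    have := h a a.2 b b.2
    rw [← sum_coe_sort Q] at this
    rw [Matrix.mul_apply, Matrix.one_apply]
    convert this using 2
    · rfl
    · exact Subtype.ext_iff
  have hGF : G * F = 1 := mul_eq_one_comm.1 hFG
  have := congrArg (fun M : Matrix Q Q R => M ⟨u, hu⟩ ⟨v, hv⟩) hGF
  rw [Matrix.mul_apply, Matrix.one_apply] at this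
  rw [← sum_coe_sort Q]
  convert this using 2
  · rfl
  · exact Subtype.mk_eq_mk.symm

def words (s : ℕ) : ℕ → Finset (List (Letter s))
  | 0 => {[]}
  | ℓ + 1 => (univ ×ˢ words s ℓ).image fun p => p.1 :: p.2

lemma mem_words {ℓ : ℕ} : z ∈ words s ℓ ↔ z.length = ℓ := by
  induction ℓ generalizing z with
  | zero => simp [words]
  | succ ℓ ih => cases z <;> simp [words, ih]

lemma sum_words_succ {M : Type*} [AddCommMonoid M] (ℓ : ℕ) (f : List (Letter s) → M) :
    ∑ z ∈ words s (ℓ + 1), f z = ∑ y, ∑ z ∈ words s ℓ, f (y :: z) := by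
  rw [words, sum_image (by simp), sum_product]

def wordSign (z : List (Letter s)) : ℤ := (-1) ^ z.countP Option.isSome

@[simp] lemma wordSign_none_cons : wordSign (none :: z) = wordSign z := by
  simp [wordSign]

@[simp] lemma wordSign_some_cons (i : Fin s) : wordSign (some i :: z) = -wordSign z := by
  simp [wordSign, pow_succ]

lemma wordSign_replicate_none (k : ℕ) : wordSign (replicate k (none : Letter s)) = 1 := by
  rw [wordSign, countP_eq_zero.2 (by simp), pow_zero]

lemma wordSign_of_forall_ne_none (h : ∀ x ∈ z, x ≠ none) : wordSign z = (-1) ^ z.length := by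
  rw [wordSign, countP_eq_length.2 (by simpa [Option.isSome_iff_ne_none] using h)]

open scoped Classical in
noncomputable def upperSignSum (u : List (Letter s)) (ℓ : ℕ) : ℤ :=
  ∑ z ∈ words s ℓ with WLE u z, wordSign z

lemma upperSignSum_cons_zero : upperSignSum (x :: u) 0 = 0 := by
  simp [upperSignSum, words, Finset.filter_singleton, not_wle_cons_nil]

lemma upperSignSum_cons_succ (x : Letter s) (u : List (Letter s)) (ℓ : ℕ) :
    upperSignSum (x :: u) (ℓ + 1) = upperSignSum u ℓ -
      ∑ j, if x = some j then upperSignSum u ℓ else upperSignSum (x :: u) ℓ := by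
  classical
  simp only [upperSignSum, sum_filter, sum_words_succ, Fintype.sum_option, wordSign_none_cons,
    wle_cons_cons_iff_of_rel (Or.inr rfl), wordSign_some_cons, sub_eq_add_neg, ← sum_neg_distrib]
  congr 1
  refine sum_congr rfl fun j _ => ?_
  split_ifs with hj
  · simp [wle_cons_cons_iff_of_rel (Or.inl hj), ← sum_neg_distrib, apply_ite]
  · simp [wle_cons_cons_iff_of_not_rel (x := x) (y := some j) (by simpa using hj),
      ← sum_neg_distrib, apply_ite]

lemma upperSignSum_some_cons (i : Fin s) (u : List (Letter s)) (ℓ : ℕ) :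
    upperSignSum (some i :: u) ℓ = 0 := by
  induction ℓ with
  | zero => exact upperSignSum_cons_zero
  | succ ℓ ih => simp [upperSignSum_cons_succ, ih]

lemma upperSignSum_none_cons (h : ∀ ℓ, upperSignSum u ℓ = 0) (ℓ : ℕ) :
    upperSignSum (none :: u) ℓ = 0 := by
  induction ℓ with
  | zero => exact upperSignSum_cons_zero
  | succ ℓ ih => simp [upperSignSum_cons_succ, ih, h]

lemma upperSignSum_eq_zero (h : ∃ x ∈ u, x ≠ none) (ℓ : ℕ) : upperSignSum u ℓ = 0 := by
  induction u generalizing ℓ with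
  | nil => simp at h
  | cons x u ih =>
    cases x with
    | some i => exact upperSignSum_some_cons i u ℓ
    | none =>
      refine upperSignSum_none_cons (ih ?_) ℓ
      simpa using h

def wordsUpTo (s n : ℕ) : Finset (List (Letter s)) := (Finset.range (n + 1)).biUnion (words s)

lemma mem_wordsUpTo {n : ℕ} : z ∈ wordsUpTo s n ↔ z.length ≤ n := by
  simp [wordsUpTo, mem_words]

open scoped Classical in
lemma sum_wordSign_mul_eq_zero (h : ∃ x ∈ u, x ≠ none) (n : ℕ) (g : ℕ → ℤ) :
    ∑ z ∈ wordsUpTo s n with WLE u z, wordSign z * g z.length = 0 := by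
  rw [wordsUpTo, filter_biUnion, sum_biUnion fun ℓ₁ _ ℓ₂ _ hne => disjoint_filter_filter <|
    disjoint_left.2 fun z h₁ h₂ => hne (mem_words.1 h₁ ▸ mem_words.1 h₂)]
  refine Finset.sum_eq_zero fun ℓ _ => ?_
  calc ∑ z ∈ words s ℓ with WLE u z, wordSign z * g z.length
      = upperSignSum u ℓ * g ℓ := by
        rw [upperSignSum, sum_mul]
        exact sum_congr rfl fun z hz => by rw [mem_words.1 (mem_filter.1 hz).1]
    _ = 0 := by rw [upperSignSum_eq_zero h, zero_mul]

structure IsMobius (μ : List (Letter s) → List (Letter s) → ℤ) : Prop where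
  apply_self : ∀ u, μ u u = 1
  apply_of_not_wle : ∀ u v, ¬ WLE u v → μ u v = 0
  finsum_Icc : ∀ u v, WLE u v → u ≠ v → ∑ᶠ z ∈ {z | WLE u z ∧ WLE z v}, μ u z = 0

namespace IsMobius

variable {μ : List (Letter s) → List (Letter s) → ℤ}

open scoped Classical in
lemma sum_mul_zeta (hμ : IsMobius μ) {N : ℕ} (hv : v.length ≤ N) :
    ∑ z ∈ wordsUpTo s N, μ u z * (if WLE z v then 1 else 0) = if u = v then 1 else 0 := by
  have hIcc : ∑ z ∈ wordsUpTo s N, μ u z * (if WLE z v then 1 else 0) =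
      ∑ z ∈ wordsUpTo s N with WLE u z ∧ WLE z v, μ u z := by
    rw [sum_filter]
    refine sum_congr rfl fun z _ => ?_
    by_cases h₁ : WLE u z <;> by_cases h₂ : WLE z v <;> simp [h₁, h₂, hμ.apply_of_not_wle]
  rw [hIcc]
  by_cases huv : u = v
  · subst huv
    rw [if_pos rfl, sum_eq_single_of_mem u (by simp [mem_wordsUpTo, hv, WLE.refl])
      fun z hz hzu => absurd ((mem_filter.1 hz).2.2.antisymm (mem_filter.1 hz).2.1) hzu,
      hμ.apply_self]
  rw [if_neg huv]
  by_cases hle : WLE u v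
  · have hset : {z | WLE u z ∧ WLE z v} = ↑({z ∈ wordsUpTo s N | WLE u z ∧ WLE z v}) := by
      ext z
      simpa [mem_wordsUpTo] using fun _ (h : WLE z v) => h.length_le.trans hv
    rw [← hμ.finsum_Icc u v hle huv, hset, finsum_mem_coe_finset]
  · exact sum_eq_zero fun z hz => (hle ((mem_filter.1 hz).2.1.trans (mem_filter.1 hz).2.2)).elim

open scoped Classical in
lemma sum_wle_apply_eq_zero (hμ : IsMobius μ) (huv : u ≠ v) (hu : u.length ≤ v.length) :
    ∑ z ∈ wordsUpTo s v.length with WLE u z, μ z v = 0 := by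
  have := Finset.sum_mul_eq_ite_swap (wordsUpTo s v.length) μ (fun a b => if WLE a b then 1 else 0)
    (fun _ _ _ hb => hμ.sum_mul_zeta (mem_wordsUpTo.1 hb)) (mem_wordsUpTo.2 hu)
    (mem_wordsUpTo.2 le_rfl)
  simpa [sum_filter, huv] using this

theorem apply_replicate_none (hμ : IsMobius μ) {n : ℕ} (hu : u.length ≤ n) :
    μ u (replicate n none) = wordSign u * μ (replicate u.length none) (replicate n none) := by
  classical
  -- `u.length + u.count none` increases strictly along `WLE` and is at most `2 * n`
  induction hk : 2 * n - (u.length + u.count none) using Nat.strong_induction_on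
    generalizing u with
  | _ k ih =>
  by_cases hc : ∃ x ∈ u, x ≠ none
  swap
  · push Not at hc
    obtain ⟨ℓ, rfl⟩ : ∃ ℓ, u = replicate ℓ none := ⟨_, eq_replicate_iff.2 ⟨rfl, hc⟩⟩
    rw [wordSign_replicate_none, length_replicate, one_mul]
  have hne : u ≠ replicate n none := by
    rintro rfl
    simp at hc
  have hmem : u ∈ {z ∈ wordsUpTo s n | WLE u z} := mem_filter.2 ⟨mem_wordsUpTo.2 hu, WLE.refl u⟩
  have hμsum := hμ.sum_wle_apply_eq_zero hne (by simpa using hu)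
  have hsign := sum_wordSign_mul_eq_zero hc n fun ℓ => μ (replicate ℓ none) (replicate n none)
  rw [length_replicate, ← add_sum_erase _ _ hmem] at hμsum
  rw [← add_sum_erase _ _ hmem] at hsign
  have hstep : ∀ z ∈ {z ∈ wordsUpTo s n | WLE u z}.erase u,
      μ z (replicate n none) = wordSign z * μ (replicate z.length none) (replicate n none) := by
    intro z hz
    obtain ⟨hzu, hz⟩ := mem_erase.1 hz
    obtain ⟨hzn, huz⟩ := mem_filter.1 hz
    rw [mem_wordsUpTo] at hzn
    have hlt := huz.length_add_count_none_lt (Ne.symm hzu)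
    have := count_le_length (a := none) (l := z)
    exact ih _ (by omega) hzn rfl
  rw [sum_congr rfl hstep] at hμsum
  linarith

end IsMobius

/-- For `0 ≤ m ≤ n` and any word `w` of length `m` all of whose letters lie in
`{a_1, …, a_s}`: `μ(w, c^n) = μ(a_1^m, c^n) = (−1)^m μ(c^m, c^n)`. -/
theorem mu_a_words (s : ℕ) (hs : 1 ≤ s)
    (μ : List (Letter s) → List (Letter s) → ℤ)
    (hrefl : ∀ u, μ u u = 1)
    (hnle : ∀ u v, ¬ WLE u v → μ u v = 0)
    (hsum : ∀ u v, WLE u v → u ≠ v → ∑ᶠ z ∈ {z : List (Letter s) | WLE u z ∧ WLE z v}, μ u z = 0)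
    (m n : ℕ) (hmn : m ≤ n) (w : List (Letter s)) (hw : w.length = m)
    (hwa : ∀ x ∈ w, x ≠ (none : Letter s)) :
    μ w (List.replicate n (none : Letter s)) =
        μ (List.replicate m (some (⟨0, hs⟩ : Fin s) : Letter s))
          (List.replicate n (none : Letter s)) ∧
      μ (List.replicate m (some (⟨0, hs⟩ : Fin s) : Letter s))
          (List.replicate n (none : Letter s)) =
        (-1 : ℤ) ^ m * μ (List.replicate m (none : Letter s)) (List.replicate n (none : Letter s)) := by
  have hμ : IsMobius μ := ⟨hrefl, hnle, hsum⟩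
  have hsign {u : List (Letter s)} (hu : u.length = m) (ha : ∀ x ∈ u, x ≠ none) :
      μ u (replicate n none) = (-1) ^ m * μ (replicate m none) (replicate n none) := by
    rw [hμ.apply_replicate_none (hu ▸ hmn), wordSign_of_forall_ne_none ha, hu]
  have ha := hsign (u := replicate m (some ⟨0, hs⟩)) (length_replicate ..) fun x hx => by
    simp [eq_of_mem_replicate hx]
  exact ⟨(hsign hw hwa).trans ha.symm, ha⟩
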